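/- If p - p' < √(p') for every prime p ≥ 131 (p' the previous prime), then for every integer n ≥ 131 the interval (n, n + √n) contains a prime. -/

import Mathlib

/-! With p the least prime above n and p' the greatest prime at most n, p' is the prime preceding p,
so the hypothesis gives p < p' + √p' ≤ n + √n. -/

def PrevPrime (p p' : ℕ) : Prop :=
  p'.Prime ∧ p' < p ∧ ∀ r : ℕ, r.Prime → r < p → r ≤ p'

lemma exists_prevPrime_le_lt {n : ℕ} (hn : 2 ≤ n) :
    ∃ p p' : ℕ, p.Prime ∧ PrevPrime p p' ∧ p' ≤ n ∧ n < p := by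
  classical
  have hex : ∃ p, p.Prime ∧ n < p := (Nat.exists_infinite_primes (n + 1)).imp fun _ h => h.symm
  obtain ⟨hp, hnp⟩ := Nat.find_spec hex
  have hp'_le : Nat.findGreatest Nat.Prime n ≤ n := Nat.findGreatest_le n
  refine ⟨Nat.find hex, Nat.findGreatest Nat.Prime n, hp,
    ⟨Nat.findGreatest_spec hn Nat.prime_two, hp'_le.trans_lt hnp, fun r hr hrp => ?_⟩, hp'_le, hnp⟩
  have hrn : r ≤ n := not_lt.mp fun hnr => Nat.find_min hex hrp ⟨hr, hnr⟩
  exact Nat.le_findGreatest hrn hr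

theorem stmt13
    (h : ∀ p p' : ℕ, p.Prime → 131 ≤ p → PrevPrime p p' → (p : ℝ) - p' < Real.sqrt p') :
    ∀ n : ℕ, 131 ≤ n → ∃ r : ℕ, r.Prime ∧ (n : ℝ) < r ∧ (r : ℝ) < n + Real.sqrt n := by
  intro n hn
  obtain ⟨p, p', hp, hprev, hp'n, hnp⟩ := exists_prevPrime_le_lt (n := n) (by omega)
  have hgap := h p p' hp (by omega) hprev
  have hp'n_real : (p' : ℝ) ≤ n := by exact_mod_cast hp'n
  have hsqrt : Real.sqrt p' ≤ Real.sqrt n := Real.sqrt_le_sqrt hp'n_real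
  exact ⟨p, hp, by exact_mod_cast hnp, by linarith⟩
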